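/- arXiv:2311.02524 — 2 statements merged into one kernel-verified Lean document; each statement's English description precedes it below -/
import Mathlib

section
/- Let 0 < ρ < 1, M > 1, p > 0 with ρM^p ≤ 1/2, and let (α_k), (β_k) be nonnegative sequences with α_k ≤ ρ^k + Σ_{i=0}^{k−1} ρ^{k−i} β_i for k ≥ 1 and Σ_{k=0}^∞ M^{pk} β_k ≤ C for some C ≥ 0. Then Σ_{k=1}^∞ M^{pk} α_k ≤ 1 + C, i.e. the series Σ M^{pk} α_k converges with an explicit bound. -/
/-!
Multiplying the decay estimate for `α (k + 1)` by `M ^ (p * (k + 1)) = (M ^ p) ^ (k + 1)` gives the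
same kind of estimate with `ρ` replaced by `q = ρ * M ^ p ≤ 1 / 2` and `β i` by `M ^ (p * i) * β i`.
Summing over `k`, the geometric part contributes at most `∑ 2⁻¹ ^ (j + 1) ≤ 1`, and the convolution
part is bounded by the Cauchy product estimate `(∑ g) * (∑ q ^ (j + 1)) ≤ C * 1`.
-/

open Finset Real

lemma sum_range_mul_sum_range_sub_le {g w : ℕ → ℝ} (hg : ∀ i, 0 ≤ g i) (hw : ∀ j, 0 ≤ w j)
    (n : ℕ) :
    ∑ k ∈ range n, ∑ i ∈ range (k + 1), g i * w (k - i) ≤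
      (∑ i ∈ range n, g i) * ∑ j ∈ range n, w j := by
  rw [sum_range_diag_flip n fun i j => g i * w j, sum_mul]
  gcongr with i hi
  rw [← mul_sum]
  exact mul_le_mul_of_nonneg_left (sum_le_sum_of_subset_of_nonneg
    (range_subset_range.2 (Nat.sub_le n i)) fun j _ _ => hw j) (hg i)

lemma sum_range_pow_succ_le_one {q : ℝ} (hq0 : 0 ≤ q) (hq : q ≤ 1 / 2) (n : ℕ) :
    ∑ j ∈ range n, q ^ (j + 1) ≤ 1 :=
  calc ∑ j ∈ range n, q ^ (j + 1)
      ≤ ∑ j ∈ range n, (1 / 2 : ℝ) ^ (j + 1) := by gcongr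
    _ = 1 / 2 * ∑ j ∈ range n, (1 / 2 : ℝ) ^ j := by simp only [pow_succ', mul_sum]
    _ ≤ 1 := by linarith [sum_geometric_two_le n]

lemma sum_range_le_of_le_geometric_conv {a g : ℕ → ℝ} {q C : ℝ} (hq0 : 0 ≤ q) (hq : q ≤ 1 / 2)
    (hg : ∀ i, 0 ≤ g i) (hgC : ∀ n, ∑ i ∈ range n, g i ≤ C)
    (ha : ∀ k, a k ≤ q ^ (k + 1) + ∑ i ∈ range (k + 1), g i * q ^ (k - i + 1)) (n : ℕ) :
    ∑ k ∈ range n, a k ≤ 1 + C := by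
  have hgeom := sum_range_pow_succ_le_one hq0 hq n
  have hconv : (∑ i ∈ range n, g i) * ∑ j ∈ range n, q ^ (j + 1) ≤ C :=
    (mul_le_of_le_one_right (sum_nonneg fun i _ => hg i) hgeom).trans (hgC n)
  calc ∑ k ∈ range n, a k
      ≤ ∑ k ∈ range n, (q ^ (k + 1) + ∑ i ∈ range (k + 1), g i * q ^ (k - i + 1)) :=
        sum_le_sum fun k _ => ha k
    _ = ∑ k ∈ range n, q ^ (k + 1) + ∑ k ∈ range n, ∑ i ∈ range (k + 1), g i * q ^ (k - i + 1) :=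
        sum_add_distrib
    _ ≤ 1 + C := add_le_add hgeom <|
        (sum_range_mul_sum_range_sub_le hg (fun j => pow_nonneg hq0 (j + 1)) n).trans hconv

lemma pow_succ_mul_le_of_le_decay {ρ m a : ℝ} {β : ℕ → ℝ} {k : ℕ} (hm : 0 ≤ m)
    (h : a ≤ ρ ^ (k + 1) + ∑ i ∈ range (k + 1), ρ ^ (k + 1 - i) * β i) :
    m ^ (k + 1) * a ≤
      (ρ * m) ^ (k + 1) + ∑ i ∈ range (k + 1), m ^ i * β i * (ρ * m) ^ (k - i + 1) := by
  refine (mul_le_mul_of_nonneg_left h (pow_nonneg hm _)).trans_eq ?_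
  rw [mul_add, mul_sum, mul_pow, mul_comm]
  congr 1
  refine sum_congr rfl fun i hi => ?_
  obtain ⟨j, rfl⟩ := Nat.exists_eq_add_of_le (Nat.lt_succ_iff.1 (mem_range.1 hi))
  rw [show i + j + 1 - i = j + 1 by omega, show i + j - i = j by omega, mul_pow, pow_add, pow_add]
  ring

theorem summation_of_decay_general (ρ M p C : ℝ)
    (hρ0 : 0 < ρ) (hM : 1 < M)
    (hsmall : ρ * M ^ p ≤ 1 / 2)
    (α β : ℕ → ℝ) (hα : ∀ k, 0 ≤ α k) (hβ : ∀ k, 0 ≤ β k)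
    (hdecay : ∀ k : ℕ, 1 ≤ k →
      α k ≤ ρ ^ k + ∑ i ∈ Finset.range k, ρ ^ (k - i) * β i)
    (hsum : ∀ n : ℕ, ∑ k ∈ Finset.range n, M ^ (p * k) * β k ≤ C) :
    Summable (fun k : ℕ => M ^ (p * (k + 1 : ℕ)) * α (k + 1)) ∧
      ∑' k : ℕ, M ^ (p * (k + 1 : ℕ)) * α (k + 1) ≤ 1 + C := by
  have hM0 : 0 ≤ M := by linarith
  set m := M ^ p
  have hm : 0 ≤ m := rpow_nonneg hM0 p
  simp only [rpow_mul_natCast hM0] at hsum ⊢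
  have hnonneg k : 0 ≤ m ^ (k + 1) * α (k + 1) := mul_nonneg (pow_nonneg hm _) (hα _)
  have hbound := sum_range_le_of_le_geometric_conv (mul_nonneg hρ0.le hm) hsmall
    (fun i => mul_nonneg (pow_nonneg hm i) (hβ i)) hsum
    fun k => pow_succ_mul_le_of_le_decay hm (hdecay (k + 1) (Nat.le_add_left 1 k))
  exact ⟨summable_of_sum_range_le hnonneg hbound, Real.tsum_le_of_sum_range_le hnonneg hbound⟩

theorem summation_of_decay (ρ M p C : ℝ)
    (hρ0 : 0 < ρ) (hρ1 : ρ < 1) (hM : 1 < M) (hp : 0 < p)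
    (hsmall : ρ * M ^ p ≤ 1 / 2) (hC : 0 ≤ C)
    (α β : ℕ → ℝ) (hα : ∀ k, 0 ≤ α k) (hβ : ∀ k, 0 ≤ β k)
    (hdecay : ∀ k : ℕ, 1 ≤ k →
      α k ≤ ρ ^ k + ∑ i ∈ Finset.range k, ρ ^ (k - i) * β i)
    (hsum : ∀ n : ℕ, ∑ k ∈ Finset.range n, M ^ (p * k) * β k ≤ C) :
    Summable (fun k : ℕ => M ^ (p * (k + 1 : ℕ)) * α (k + 1)) ∧
      ∑' k : ℕ, M ^ (p * (k + 1 : ℕ)) * α (k + 1) ≤ 1 + C :=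
  summation_of_decay_general ρ M p C hρ0 hM hsmall α β hα hβ hdecay hsum
end

section
/- Let 0 < ρ < 1/2 and C > 0. Suppose u : Q → ℝ and for every k ≥ 1 there is a second-order parabolic polynomial P_k with sup_{Q_{ρ^k}} |u − P_k| ≤ ρ^{2k}, where the coefficients of P_k satisfy |A_k − u(0,0)| ≤ Cρ^{2k}, |B_k − b| ≤ Cρ^k (for a fixed vector b), |C_k| ≤ Ck and |D_k| ≤ Ck. Then there exists C' = C'(ρ, C) > 0 such that for all sufficiently small r > 0, sup_{Q_r} |u(x,t) − u(0,0) − b·x| ≤ C' r² log(1/r). -/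
/-! Given `0 < r ≤ ρ`, pick `k ≥ 1` with `ρ ^ (k + 1) < r ≤ ρ ^ k` and compare `u` with
`P_k` on `Q_r ⊆ Q_{ρ^k}`. The constant, time and linear parts of `P_k - u(0,0) - b·x` are `O(r²)`
because `ρ ^ k < r / ρ`, while the quadratic part is `O(k r²)`, and `k ≤ log (1/r) / log (1/ρ)`. -/

open Matrix

noncomputable section

def parCyl (d : ℕ) (r : ℝ) : Set (EuclideanSpace ℝ (Fin d) × ℝ) :=
  {z | ‖z.1‖ < r ∧ -r ^ 2 < z.2 ∧ z.2 ≤ 0}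

def parPoly {d : ℕ} (D : Matrix (Fin d) (Fin d) ℝ) (C : ℝ)
    (B : EuclideanSpace ℝ (Fin d)) (A : ℝ)
    (z : EuclideanSpace ℝ (Fin d) × ℝ) : ℝ :=
  (1 / 2) * ((z.1 : Fin d → ℝ) ⬝ᵥ D.mulVec (z.1 : Fin d → ℝ)) + C * z.2 +
    inner ℝ B z.1 + A

lemma abs_dotProduct_mulVec_le {ι : Type*} [Fintype ι] {M : Matrix ι ι ℝ}
    {x : EuclideanSpace ℝ ι} {δ r : ℝ} (hM : ∀ i j, |M i j| ≤ δ) (hx : ‖x‖ ≤ r) :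
    |(x : ι → ℝ) ⬝ᵥ M *ᵥ (x : ι → ℝ)| ≤ (Fintype.card ι : ℝ) ^ 2 * δ * r ^ 2 := by
  have hcoord : ∀ i, |x i| ≤ r := fun i => (PiLp.norm_apply_le x i).trans hx
  have hterm : ∀ i j, |x i * (M i j * x j)| ≤ r * (δ * r) := fun i j => by
    have hδ : 0 ≤ δ := (abs_nonneg _).trans (hM i j)
    rw [abs_mul, abs_mul]
    exact mul_le_mul (hcoord i) (mul_le_mul (hM i j) (hcoord j) (abs_nonneg _) hδ)
      (by positivity) ((abs_nonneg _).trans (hcoord i))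
  calc |(x : ι → ℝ) ⬝ᵥ M *ᵥ (x : ι → ℝ)| = |∑ i, ∑ j, x i * (M i j * x j)| := by
        simp only [dotProduct, mulVec, Finset.mul_sum]
    _ ≤ ∑ i, ∑ j, |x i * (M i j * x j)| :=
        (Finset.abs_sum_le_sum_abs _ _).trans
          (Finset.sum_le_sum fun i _ => Finset.abs_sum_le_sum_abs _ _)
    _ ≤ ∑ _i : ι, ∑ _j : ι, r * (δ * r) :=
        Finset.sum_le_sum fun i _ => Finset.sum_le_sum fun j _ => hterm i j
    _ = (Fintype.card ι : ℝ) ^ 2 * δ * r ^ 2 := by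
        simp only [Finset.sum_const, Finset.card_univ, nsmul_eq_mul]
        ring

lemma abs_parPoly_sub_affine_le {d : ℕ} {D : Matrix (Fin d) (Fin d) ℝ} {c : ℝ}
    {B b : EuclideanSpace ℝ (Fin d)} {A a : ℝ} {z : EuclideanSpace ℝ (Fin d) × ℝ}
    {r δ γ β α : ℝ} (hz : z ∈ parCyl d r) (hD : ∀ i j, |D i j| ≤ δ) (hc : |c| ≤ γ)
    (hB : ‖B - b‖ ≤ β) (hA : |A - a| ≤ α) :
    |parPoly D c B A z - a - inner ℝ b z.1| ≤
      (d : ℝ) ^ 2 * δ * r ^ 2 / 2 + γ * r ^ 2 + β * r + α := by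
  obtain ⟨hx, ht_lower, ht_upper⟩ := hz
  have hquad := abs_dotProduct_mulVec_le hD hx.le
  rw [Fintype.card_fin] at hquad
  have htime : |c * z.2| ≤ γ * r ^ 2 :=
    abs_mul c z.2 ▸ mul_le_mul hc (abs_le.mpr ⟨by linarith, by nlinarith⟩) (abs_nonneg _)
      ((abs_nonneg _).trans hc)
  have hlin : |inner ℝ (B - b) z.1| ≤ β * r :=
    (abs_real_inner_le_norm _ _).trans
      (mul_le_mul hB hx.le (norm_nonneg _) ((norm_nonneg _).trans hB))
  have hsplit : parPoly D c B A z - a - inner ℝ b z.1 =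
      (1 / 2) * ((z.1 : Fin d → ℝ) ⬝ᵥ D *ᵥ (z.1 : Fin d → ℝ)) + c * z.2 +
        inner ℝ (B - b) z.1 + (A - a) := by
    simp only [parPoly, inner_sub_left]
    ring
  rw [hsplit]
  refine (abs_add_le _ _).trans (add_le_add ((abs_add_le _ _).trans (add_le_add
    ((abs_add_le _ _).trans (add_le_add ?_ htime)) hlin)) hA)
  rw [abs_mul, abs_of_pos (by norm_num : (0 : ℝ) < 1 / 2)]
  linarith

lemma parCyl_mono {d : ℕ} {r s : ℝ} (hrs : r ≤ s) (hr : 0 ≤ r) : parCyl d r ⊆ parCyl d s :=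
  fun _ ⟨hx, ht_lower, ht_upper⟩ =>
    ⟨hx.trans_le hrs, by nlinarith [pow_le_pow_left₀ hr hrs 2], ht_upper⟩

lemma exists_pow_succ_lt_le_pow {r ρ : ℝ} (hr : 0 < r) (hrρ : r ≤ ρ) (hρ1 : ρ < 1) :
    ∃ k : ℕ, 1 ≤ k ∧ ρ ^ (k + 1) < r ∧ r ≤ ρ ^ k := by
  obtain ⟨k, hlt, hle⟩ :=
    exists_nat_pow_near_of_lt_one hr (hrρ.trans hρ1.le) (hr.trans_le hrρ) hρ1
  refine ⟨k, Nat.one_le_iff_ne_zero.mpr ?_, hlt, hle⟩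
  rintro rfl
  rw [zero_add, pow_one] at hlt
  linarith

lemma nat_mul_log_inv_le_log_inv {r ρ : ℝ} {k : ℕ} (hr : 0 < r) (hrρ : r ≤ ρ ^ k) :
    k * Real.log (1 / ρ) ≤ Real.log (1 / r) := by
  rw [← Real.log_pow, _root_.one_div_pow]
  exact Real.log_le_log (one_div_pos.mpr (hr.trans_le hrρ)) (one_div_le_one_div_of_le hr hrρ)

theorem parabolic_C1_LogLip (d : ℕ) (ρ C : ℝ)
    (hρ0 : 0 < ρ) (hρ1 : ρ < 1 / 2) (hC : 0 < C)
    (u : EuclideanSpace ℝ (Fin d) × ℝ → ℝ)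
    (b : EuclideanSpace ℝ (Fin d))
    (D : ℕ → Matrix (Fin d) (Fin d) ℝ) (Ck : ℕ → ℝ)
    (B : ℕ → EuclideanSpace ℝ (Fin d)) (A : ℕ → ℝ)
    (happ : ∀ k : ℕ, 1 ≤ k → ∀ z ∈ parCyl d (ρ ^ k),
      |u z - parPoly (D k) (Ck k) (B k) (A k) z| ≤ ρ ^ (2 * k))
    (hA : ∀ k : ℕ, 1 ≤ k → |A k - u (0, 0)| ≤ C * ρ ^ (2 * k))
    (hB : ∀ k : ℕ, 1 ≤ k → ‖B k - b‖ ≤ C * ρ ^ k)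
    (hCk : ∀ k : ℕ, 1 ≤ k → |Ck k| ≤ C * k)
    (hD : ∀ k : ℕ, 1 ≤ k → ∀ i j, |D k i j| ≤ C * k) :
    ∃ C' : ℝ, 0 < C' ∧ ∃ r₀ : ℝ, 0 < r₀ ∧ ∀ r : ℝ, 0 < r → r ≤ r₀ →
      ∀ z ∈ parCyl d r,
        |u z - u (0, 0) - inner ℝ b z.1| ≤ C' * r ^ 2 * Real.log (1 / r) := by
  have hρ_lt_one : ρ < 1 := by linarith
  have hL : 0 < Real.log (1 / ρ) := Real.log_pos (one_lt_one_div hρ0 hρ_lt_one)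
  set a := (1 + C) / ρ ^ 2 + C / ρ + C * ((d : ℝ) ^ 2 / 2 + 1) with ha
  refine ⟨a / Real.log (1 / ρ), by positivity, ρ, hρ0, fun r hr hrρ z hz => ?_⟩
  obtain ⟨k, hk, hρr, hrρk⟩ := exists_pow_succ_lt_le_pow hr hrρ hρ_lt_one
  have hscale : ρ ^ k < r / ρ := by rwa [lt_div_iff₀ hρ0, ← pow_succ]
  have hscale_sq : ρ ^ (2 * k) ≤ r ^ 2 / ρ ^ 2 := by
    rw [pow_mul', ← div_pow]
    exact pow_le_pow_left₀ (by positivity) hscale.le 2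
  have hscale_mul : ρ ^ k * r ≤ r ^ 2 / ρ :=
    calc ρ ^ k * r ≤ r / ρ * r := mul_le_mul_of_nonneg_right hscale.le hr.le
      _ = r ^ 2 / ρ := by ring
  have hk_log : (k : ℝ) ≤ Real.log (1 / r) / Real.log (1 / ρ) :=
    (le_div_iff₀ hL).mpr (nat_mul_log_inv_le_log_inv hr hrρk)
  have hk_one : (1 : ℝ) ≤ k := by exact_mod_cast hk
  calc |u z - u (0, 0) - inner ℝ b z.1|
      ≤ |u z - parPoly (D k) (Ck k) (B k) (A k) z|
        + |parPoly (D k) (Ck k) (B k) (A k) z - u (0, 0) - inner ℝ b z.1| := by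
        simpa only [sub_sub] using abs_sub_le (u z) (parPoly (D k) (Ck k) (B k) (A k) z)
          (u (0, 0) + inner ℝ b z.1)
    _ ≤ ρ ^ (2 * k) + ((d : ℝ) ^ 2 * (C * k) * r ^ 2 / 2 + C * k * r ^ 2 + C * ρ ^ k * r
          + C * ρ ^ (2 * k)) :=
        add_le_add (happ k hk z (parCyl_mono hrρk hr.le hz))
          (abs_parPoly_sub_affine_le hz (hD k hk) (hCk k hk) (hB k hk) (hA k hk))
    _ ≤ ((1 + C) / ρ ^ 2 + C / ρ + C * ((d : ℝ) ^ 2 / 2 + 1) * k) * r ^ 2 := by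
        linear_combination (1 + C) * hscale_sq + C * hscale_mul
    _ ≤ a * k * r ^ 2 := by
        rw [ha]
        gcongr
        nlinarith [show 0 ≤ (1 + C) / ρ ^ 2 + C / ρ by positivity]
    _ ≤ a * (Real.log (1 / r) / Real.log (1 / ρ)) * r ^ 2 := by gcongr
    _ = a / Real.log (1 / ρ) * r ^ 2 * Real.log (1 / r) := by ring

end
end
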